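/- Stability of kernel generators under the section (the paper's Lemma: 'for any n ≥ 0, p_α^n maps ℂ[[Λ^{1/2}]]_{(α)} · y_α^{(1)} into ℂ[[Λ^{1/2}]]_{(α)} · y_α^{(n+1)}'): let a ∈ G with a ≠ 0 and n ∈ ℕ. For every a-finite g : G → ℂ there exists an a-finite g' : G → ℂ such that p_a^n (g ⋆_a c_1) = g' ⋆_a c_{n+1}, where p_a^n denotes the n-fold iterate of p_a. -/

import Mathlib

/-- The lattice `ℤ^d`, modeling the lattice `Λ^{1/2}` of half-weights. -/
abbrev Glat (d : ℕ) : Type := Fin d → ℤ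

/-- Multiplication by `d_{α,-} = α^{-1/2} - α^{1/2}` on unbounded Laurent series,
modeled as the operator `(t_a f) x = f (x + a) - f (x - a)`. -/
def ta {d : ℕ} (a : Glat d) (f : Glat d → ℂ) : Glat d → ℂ :=
  fun x => f (x + a) - f (x - a)

/-- The standard inner product on `ℤ^d`. -/
def innerZ {d : ℕ} (x y : Glat d) : ℤ := ∑ i, x i * y i

/-- The nonnegative part `m⁺` of an unbounded Laurent series `m` with respect to `a`. -/
def mplus {d : ℕ} (a : Glat d) (m : Glat d → ℂ) (x : Glat d) : ℂ :=
  if 0 ≤ innerZ x a then m x else 0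

/-- The negative part `m⁻ = m - m⁺`. -/
def mminus {d : ℕ} (a : Glat d) (m : Glat d → ℂ) (x : Glat d) : ℂ :=
  m x - mplus a m x

/-- The section `p_a m x = Σ_{k∈ℕ} m⁺ (x - (2k+1)•a) - Σ_{k∈ℕ} m⁻ (x + (2k+1)•a)`. -/
noncomputable def pa {d : ℕ} (a : Glat d) (m : Glat d → ℂ) : Glat d → ℂ :=
  fun x =>
    (∑' k : ℕ, mplus a m (x - (2 * k + 1) • a)) - ∑' k : ℕ, mminus a m (x + (2 * k + 1) • a)

/-- The coefficient sequence `c_n` of the series `y_α^{(n)}` in powers of `α^{1/2}`: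
for `n ≥ 1`, `c_n (2k+n) = choose (n-1+k) (n-1)` and
`c_n (-(2k+n)) = (-1)^{n+1} * choose (n-1+k) (n-1)` for `k ∈ ℕ`, `0` elsewhere; `c_0 = 0`. -/
def cseq (n : ℕ) (m : ℤ) : ℤ :=
  if n = 0 then 0
  else if (n : ℤ) ≤ m ∧ (m - (n : ℤ)) % 2 = 0 then
    ((n - 1 + ((m - (n : ℤ)) / 2).toNat).choose (n - 1) : ℤ)
  else if m ≤ -(n : ℤ) ∧ (m + (n : ℤ)) % 2 = 0 then
    (-1) ^ (n + 1) * ((n - 1 + ((-m - (n : ℤ)) / 2).toNat).choose (n - 1) : ℤ)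
  else 0

/-- `g : ℤ^d → ℂ` is `a`-finite if along every coset of `ℤ•a` it has finite support. -/
def AFinite {d : ℕ} (a : Glat d) (g : Glat d → ℂ) : Prop :=
  ∀ x : Glat d, {m : ℤ | g (x + m • a) ≠ 0}.Finite

/-- Convolution `(g ⋆_a c) x = Σ_{m ∈ ℤ} g (x - m•a) * c m`; for `a`-finite `g`
only finitely many terms are nonzero. -/
noncomputable def conv {d : ℕ} (a : Glat d) (g : Glat d → ℂ) (c : ℤ → ℤ) : Glat d → ℂ :=
  fun x => ∑' m : ℤ, g (x - m • a) * (c m : ℂ)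


/-!
Induction on `n`. Since `t_a ∘ p_a = id` and, by Pascal's rule, `t_a (g ⋆ c_{n+2}) = g ⋆ c_{n+1}`,
the difference `p_a (g ⋆ c_{n+1}) - g ⋆ c_{n+2}` lies in the kernel of `t_a`, i.e. it is
`2a`-periodic. A `2a`-periodic `q` is `v ⋆ c_1` for an `a`-finite `v` supported on a strip
transversal to `a`, and as convolution commutes with `t_a`, `v ⋆ c_1 = (t_a^[n+1] v) ⋆ c_{n+2}`.
-/

open Function

section InnerProduct

variable {d : ℕ} {a : Glat d}

lemma innerZ_self_pos (ha : a ≠ 0) : 0 < innerZ a a :=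
  (Finset.sum_nonneg fun i _ => mul_self_nonneg (a i)).lt_of_ne
    (Ne.symm (dotProduct_self_eq_zero.not.mpr ha))

lemma innerZ_add_zsmul (x : Glat d) (k : ℤ) :
    innerZ (x + k • a) a = innerZ x a + k * innerZ a a := by
  simp only [innerZ, ← dotProduct.eq_1, add_dotProduct, smul_dotProduct, smul_eq_mul]

lemma innerZ_sub_zsmul (x : Glat d) (k : ℤ) :
    innerZ (x - k • a) a = innerZ x a - k * innerZ a a := by
  rw [sub_eq_add_neg, ← neg_smul, innerZ_add_zsmul]
  ring

end InnerProduct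

section RightInverse

variable {d : ℕ} {a : Glat d}

lemma mplus_sub_nsmul_eq_zero (ha : a ≠ 0) (m : Glat d → ℂ) (x : Glat d) {k : ℕ}
    (hk : innerZ x a < k) : mplus a m (x - k • a) = 0 := by
  have hA := innerZ_self_pos ha
  rw [mplus, if_neg (by rw [← natCast_zsmul, innerZ_sub_zsmul, not_le]; nlinarith)]

lemma mminus_add_nsmul_eq_zero (ha : a ≠ 0) (m : Glat d → ℂ) (x : Glat d) {k : ℕ}
    (hk : -innerZ x a < k) : mminus a m (x + k • a) = 0 := by
  have hA := innerZ_self_pos ha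
  rw [mminus, mplus, if_pos (by rw [← natCast_zsmul, innerZ_add_zsmul]; nlinarith), sub_self]

lemma ta_pa (ha : a ≠ 0) (m : Glat d → ℂ) : ta a (pa a m) = m := by
  funext x
  set F : ℕ → ℂ := fun k => mplus a m (x - (2 * k) • a)
  set G : ℕ → ℂ := fun k => mminus a m (x + (2 * k) • a)
  have hF : Summable F := summable_of_ne_finset_zero (s := .range ((innerZ x a).toNat + 1))
    fun k hk => mplus_sub_nsmul_eq_zero ha m x (by simp at hk; omega)
  have hG : Summable G := summable_of_ne_finset_zero (s := .range ((-innerZ x a).toNat + 1))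
    fun k hk => mminus_add_nsmul_eq_zero ha m x (by simp at hk; omega)
  -- Shifting by `±a` turns both sums of `p_a` into telescoping sums over even shifts.
  have h₁ : pa a m (x + a) = ∑' k, F k - ∑' k, G (k + 1) := by
    simp only [pa, F, G]
    congr 1 <;> exact tsum_congr fun k => congrArg _ (by module)
  have h₂ : pa a m (x - a) = ∑' k, F (k + 1) - ∑' k, G k := by
    simp only [pa, F, G]
    congr 1 <;> exact tsum_congr fun k => congrArg _ (by module)
  rw [ta, h₁, h₂, hF.tsum_eq_zero_add, hG.tsum_eq_zero_add]
  simp only [F, G, mminus, mul_zero, zero_smul, sub_zero, add_zero]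
  ring

end RightInverse

section Convolution

variable {d : ℕ} {a : Glat d} {v w : Glat d → ℂ}

lemma ta_sub (v w : Glat d → ℂ) : ta a (v - w) = ta a v - ta a w := by
  funext x
  simp only [ta, Pi.sub_apply]
  ring

lemma AFinite.comp_add_right (hw : AFinite a w) (b : Glat d) : AFinite a fun y => w (y + b) :=
  fun x => by simpa only [add_right_comm] using hw (x + b)

lemma AFinite.add (hv : AFinite a v) (hw : AFinite a w) : AFinite a (v + w) :=
  fun x => ((hv x).union (hw x)).subset fun m hm => by
    by_contra h
    simp_all

lemma AFinite.sub (hv : AFinite a v) (hw : AFinite a w) : AFinite a (v - w) :=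
  fun x => ((hv x).union (hw x)).subset fun m hm => by
    by_contra h
    simp_all

lemma AFinite.ta (hw : AFinite a w) : AFinite a (_root_.ta a w) :=
  (hw.comp_add_right a).sub (hw.comp_add_right (-a))

lemma AFinite.iterate_ta (hw : AFinite a w) (n : ℕ) : AFinite a ((_root_.ta a)^[n] w) := by
  induction n with
  | zero => exact hw
  | succ n ih => rw [iterate_succ_apply']; exact ih.ta

lemma AFinite.summable_conv (hw : AFinite a w) (c : ℤ → ℤ) (x : Glat d) :
    Summable fun m : ℤ => w (x - m • a) * (c m : ℂ) := by
  refine summable_of_hasFiniteSupport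
    (((hw x).preimage neg_injective.injOn).subset fun m hm => ?_)
  simp only [mem_support, Set.mem_preimage, Set.mem_ofPred_eq, neg_smul, ← sub_eq_add_neg]
    at hm ⊢
  exact left_ne_zero_of_mul hm

lemma conv_add (hv : AFinite a v) (hw : AFinite a w) (c : ℤ → ℤ) :
    conv a (v + w) c = conv a v c + conv a w c := by
  funext x
  simp only [conv, Pi.add_apply, add_mul]
  exact (hv.summable_conv c x).tsum_add (hw.summable_conv c x)

lemma conv_sub (hv : AFinite a v) (hw : AFinite a w) (c : ℤ → ℤ) :
    conv a (v - w) c = conv a v c - conv a w c := by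
  funext x
  simp only [conv, Pi.sub_apply, sub_mul]
  exact (hv.summable_conv c x).tsum_sub (hw.summable_conv c x)

lemma conv_sub_right (hw : AFinite a w) (c c' : ℤ → ℤ) :
    conv a w (c - c') = conv a w c - conv a w c' := by
  funext x
  simp only [conv, Pi.sub_apply, Int.cast_sub, mul_sub]
  exact (hw.summable_conv c x).tsum_sub (hw.summable_conv c' x)

lemma conv_comp_add_right (w : Glat d → ℂ) (c : ℤ → ℤ) (b x : Glat d) :
    conv a (fun y => w (y + b)) c x = conv a w c (x + b) :=
  tsum_congr fun m => by simp only [sub_add_eq_add_sub]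

lemma conv_add_zsmul (w : Glat d → ℂ) (c : ℤ → ℤ) (x : Glat d) (k : ℤ) :
    conv a w c (x + k • a) = conv a w (fun m => c (m + k)) x := by
  rw [conv, ← (Equiv.addRight k).tsum_eq]
  exact tsum_congr fun m => by simp only [Equiv.coe_addRight, add_smul]; congr 2; abel

lemma ta_conv (hw : AFinite a w) (c : ℤ → ℤ) :
    ta a (conv a w c) = conv a w (fun m => c (m + 1) - c (m - 1)) := by
  funext x
  have hadd : x + a = x + (1 : ℤ) • a := by module
  have hsub : x - a = x + (-1 : ℤ) • a := by module
  rw [ta, hadd, hsub, conv_add_zsmul, conv_add_zsmul]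
  exact (congrFun (conv_sub_right hw _ _) x).symm

lemma conv_ta (hw : AFinite a w) (c : ℤ → ℤ) : conv a (ta a w) c = ta a (conv a w c) := by
  funext x
  have hsub : ∀ y : Glat d, y - a = y + -a := fun y => sub_eq_add_neg y a
  rw [show ta a w = (fun y => w (y + a)) - fun y => w (y + -a) from funext fun y => by
    rw [ta, hsub]; rfl, conv_sub (hw.comp_add_right a) (hw.comp_add_right (-a)), Pi.sub_apply,
    conv_comp_add_right, conv_comp_add_right, ta, hsub]

end Convolution

section Coefficients

lemma cseq_one (m : ℤ) : cseq 1 m = if Even m then 0 else 1 := by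
  simp only [cseq, Int.even_iff]
  split_ifs <;> simp_all <;> omega

def cseqPos (n : ℕ) (m : ℤ) : ℤ :=
  if (n : ℤ) ≤ m ∧ (m - n) % 2 = 0 then ((n - 1 + ((m - n) / 2).toNat).choose (n - 1) : ℤ)
  else 0

lemma cseq_eq_cseqPos {n : ℕ} (hn : n ≠ 0) (m : ℤ) :
    cseq n m = cseqPos n m + (-1) ^ (n + 1) * cseqPos n (-m) := by
  simp only [cseq, cseqPos, if_neg hn]
  split_ifs <;> first | (exfalso; omega) | ring

lemma cseqPos_eq_choose {n k : ℕ} {m : ℤ} (h : m = n + 1 + 2 * k) :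
    cseqPos (n + 1) m = (n + k).choose n := by
  have hk : ((m - (n + 1 : ℕ)) / 2).toNat = k := by omega
  rw [cseqPos, if_pos (by omega), hk, Nat.add_sub_cancel]

lemma cseqPos_eq_zero {n : ℕ} {m : ℤ} (h : ∀ k : ℕ, m ≠ n + 2 * k) : cseqPos n m = 0 :=
  if_neg fun ⟨hle, hev⟩ => h ((m - n) / 2).toNat (by omega)

lemma cseqPos_succ_sub (n : ℕ) (m : ℤ) :
    cseqPos (n + 2) (m + 1) - cseqPos (n + 2) (m - 1) = cseqPos (n + 1) m := by
  by_cases hm : ∃ k : ℕ, m = n + 1 + 2 * k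
  · obtain ⟨k, rfl⟩ := hm
    rcases k with _ | k
    · rw [cseqPos_eq_choose (n := n + 1) (k := 0) (by push_cast; ring),
        cseqPos_eq_zero (by intro k; push_cast; omega), cseqPos_eq_choose (k := 0) rfl]
      simp
    · rw [cseqPos_eq_choose (n := n + 1) (k := k + 1) (by push_cast; ring),
        cseqPos_eq_choose (n := n + 1) (k := k) (by push_cast; ring),
        cseqPos_eq_choose (k := k + 1) rfl,
        show n + 1 + (k + 1) = n + 1 + k + 1 by ring, Nat.choose_succ_succ',
        show n + (k + 1) = n + 1 + k by ring]
      push_cast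
      ring
  · push Not at hm
    rw [cseqPos_eq_zero (by intro k; push_cast; have := hm k; omega),
      cseqPos_eq_zero (by intro k; push_cast; have := hm (k + 1); push_cast at this; omega),
      cseqPos_eq_zero (by intro k; push_cast; have := hm k; omega), sub_zero]

-- Pascal's rule on each of the two tails of `c_{n+1}`.
lemma cseq_succ_sub (n : ℕ) (m : ℤ) :
    cseq (n + 1) (m + 1) - cseq (n + 1) (m - 1) = cseq n m := by
  rcases n with _ | n
  · rw [cseq_one, cseq_one]
    simp [cseq]
  · have hpos := cseqPos_succ_sub n m
    have hneg := cseqPos_succ_sub n (-m)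
    rw [show -m + 1 = -(m - 1) by ring, show -m - 1 = -(m + 1) by ring] at hneg
    rw [cseq_eq_cseqPos (by omega), cseq_eq_cseqPos (by omega), cseq_eq_cseqPos (by omega)]
    linear_combination hpos + (-1) ^ n * hneg

end Coefficients

section Kernel

variable {d : ℕ} {a : Glat d}

lemma ta_conv_cseq_succ {w : Glat d → ℂ} (hw : AFinite a w) (n : ℕ) :
    ta a (conv a w (cseq (n + 1))) = conv a w (cseq n) := by
  rw [ta_conv hw]
  exact congrArg _ (funext (cseq_succ_sub n))

lemma conv_iterate_ta_cseq {w : Glat d → ℂ} (hw : AFinite a w) (n : ℕ) :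
    conv a ((ta a)^[n] w) (cseq (n + 1)) = conv a w (cseq 1) := by
  induction n with
  | zero => rfl
  | succ n ih =>
    rw [iterate_succ_apply', conv_ta (hw.iterate_ta n), ta_conv_cseq_succ (hw.iterate_ta n), ih]

lemma periodic_of_ta_eq_zero {q : Glat d → ℂ} (hq : ta a q = 0) : Periodic q (2 • a) := by
  intro y
  have h := congrFun hq (y + a)
  rwa [ta, Pi.zero_apply, sub_eq_zero, add_sub_cancel_right, add_assoc, ← two_nsmul] at h

lemma existsUnique_odd_sub_mul_mem_Ico {A : ℤ} (hA : 0 < A) (s : ℤ) :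
    ∃! m : ℤ, Odd m ∧ s - m * A ∈ Set.Ico 0 (2 * A) := by
  have hdiv := Int.emod_add_mul_ediv (s - A) (2 * A)
  have hnonneg := Int.emod_nonneg (s - A) (by omega : 2 * A ≠ 0)
  have hlt := Int.emod_lt_of_pos (s - A) (by omega : 0 < 2 * A)
  refine ⟨2 * ((s - A) / (2 * A)) + 1,
    ⟨odd_two_mul_add_one _, by constructor <;> nlinarith⟩, ?_⟩
  rintro _ ⟨⟨k, rfl⟩, hk₀, hk₁⟩
  have h₁ : (k - (s - A) / (2 * A)) * A < 1 * A := by nlinarith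
  have h₂ : ((s - A) / (2 * A) - k) * A < 1 * A := by nlinarith
  have := lt_of_mul_lt_mul_right h₁ hA.le
  have := lt_of_mul_lt_mul_right h₂ hA.le
  omega

lemma exists_conv_cseq_one_eq (ha : a ≠ 0) {q : Glat d → ℂ} (hq : Periodic q (2 • a)) :
    ∃ v, AFinite a v ∧ conv a v (cseq 1) = q := by
  set A := innerZ a a
  have hA : 0 < A := innerZ_self_pos ha
  have hstrip (x : Glat d) (m : ℤ) : x - m • a ∈ {y | innerZ y a ∈ Set.Ico 0 (2 * A)} ↔
      innerZ x a - m * A ∈ Set.Ico 0 (2 * A) := by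
    rw [Set.mem_ofPred_eq, innerZ_sub_zsmul]
  -- The strip `0 ≤ ⟨y, a⟩ < 2⟨a, a⟩` meets every coset `x + ℤa` in two consecutive points,
  -- exactly one of which is `x - m • a` with `m` odd.
  refine ⟨{y | innerZ y a ∈ Set.Ico 0 (2 * A)}.indicator fun y => q (y + a), fun x => ?_,
    funext fun x => ?_⟩
  · have hinj : Injective fun m : ℤ => innerZ x a + m * A := fun m m' h => by
      simpa [hA.ne'] using h
    refine ((Set.finite_Ico 0 (2 * A)).preimage hinj.injOn).subset fun m hm => ?_
    by_contra hS
    refine hm (Set.indicator_of_notMem (fun h => hS ?_) _)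
    rwa [Set.mem_ofPred_eq, innerZ_add_zsmul] at h
  · obtain ⟨_, ⟨⟨j, rfl⟩, hj⟩, huniq⟩ := existsUnique_odd_sub_mul_mem_Ico hA (innerZ x a)
    rw [conv, tsum_eq_single (2 * j + 1) fun m hm => ?_]
    · rw [Set.indicator_of_mem ((hstrip x _).mpr hj), cseq_one,
        if_neg (Int.not_even_iff_odd.mpr (odd_two_mul_add_one j)), Int.cast_one, mul_one,
        show x - (2 * j + 1) • a + a = x - j • (2 • a) by module, hq.sub_zsmul_eq]
    · by_cases hodd : Odd m
      · rw [Set.indicator_of_notMem fun hS => hm (huniq m ⟨hodd, (hstrip x m).mp hS⟩),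
          zero_mul]
      · rw [cseq_one, if_pos (Int.not_odd_iff_even.mp hodd), Int.cast_zero, mul_zero]

lemma exists_conv_cseq_eq_of_ta_eq_zero (ha : a ≠ 0) {q : Glat d → ℂ} (hq : ta a q = 0)
    (n : ℕ) :
    ∃ f, AFinite a f ∧ conv a f (cseq (n + 1)) = q := by
  obtain ⟨v, hv, rfl⟩ := exists_conv_cseq_one_eq ha (periodic_of_ta_eq_zero hq)
  exact ⟨(ta a)^[n] v, hv.iterate_ta n, conv_iterate_ta_cseq hv n⟩

lemma exists_pa_conv_cseq_eq (ha : a ≠ 0) {g : Glat d → ℂ} (hg : AFinite a g) (n : ℕ) :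
    ∃ g', AFinite a g' ∧ pa a (conv a g (cseq (n + 1))) = conv a g' (cseq (n + 2)) := by
  set q := pa a (conv a g (cseq (n + 1))) - conv a g (cseq (n + 2))
  have hq : ta a q = 0 := by rw [ta_sub, ta_pa ha, ta_conv_cseq_succ hg, sub_self]
  obtain ⟨f, hf, hfq⟩ := exists_conv_cseq_eq_of_ta_eq_zero ha hq (n + 1)
  exact ⟨g + f, hg.add hf, by rw [conv_add hg hf, hfq, add_sub_cancel]⟩

end Kernel

theorem pa_iter_maps_kernel_generators_general {d : ℕ} (a : Glat d) (ha : a ≠ 0)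
    (n : ℕ) (g : Glat d → ℂ) (hg : AFinite a g) :
    ∃ g' : Glat d → ℂ, AFinite a g' ∧
      (pa a)^[n] (conv a g (cseq 1)) = conv a g' (cseq (n + 1)) := by
  induction n with
  | zero => exact ⟨g, hg, rfl⟩
  | succ n ih =>
    obtain ⟨g₁, hg₁, heq⟩ := ih
    rw [iterate_succ_apply', heq]
    exact exists_pa_conv_cseq_eq ha hg₁ n

/-- Stability of kernel generators under the section: for `n ≥ 0`, `p_a^n` maps
`ℂ[[Λ^{1/2}]]_{(α)} · y_α^{(1)}` into `ℂ[[Λ^{1/2}]]_{(α)} · y_α^{(n+1)}`. -/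
theorem pa_iter_maps_kernel_generators {d : ℕ} (hd : 1 ≤ d) (a : Glat d) (ha : a ≠ 0)
    (n : ℕ) (g : Glat d → ℂ) (hg : AFinite a g) :
    ∃ g' : Glat d → ℂ, AFinite a g' ∧
      (pa a)^[n] (conv a g (cseq 1)) = conv a g' (cseq (n + 1)) :=
  pa_iter_maps_kernel_generators_general a ha n g hg
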